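/- Let X ≠ Y be valid labelings, (σ, I) a move that maps X to Y, and σ' the corresponding modified proposal. Then w(X) · P(σ) · P(I | σ, X) = w(Y) · P(σ') · P(I | σ', Y). -/

import Mathlib

open scoped Classical
open Finset

noncomputable section

namespace DistSampling

variable {V L : Type*} [Fintype V] [Fintype L] [DecidableEq V] [DecidableEq L]
  [Nonempty V] [Nonempty L]

/-- `Sw b v` is the normalizing constant `S_v = Σ_{l ∈ L} b_v(l)`. -/
def Sw (b : V → L → ℝ) (v : V) : ℝ := ∑ l, b v l

/-- `Cstar C R` is the maximum value `C*_R` of the constraint `C_R` over all labelings. -/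
def Cstar (C : Finset V → (V → L) → ℝ) (R : Finset V) : ℝ :=
  Finset.univ.sup' Finset.univ_nonempty (fun X : V → L => C R X)

/-- The weight `w(X)` of a labeling `X`. -/
def weight (b : V → L → ℝ) (𝒮 : Finset (Finset V)) (C : Finset V → (V → L) → ℝ)
    (X : V → L) : ℝ :=
  (∏ v, b v (X v)) * ∏ R ∈ 𝒮, C R X

/-- A vertex is restricted under the filter outcome `I` if it belongs to a
constraint set that fails its filter. -/
def Restricted (𝒮 : Finset (Finset V)) (I : {R // R ∈ 𝒮} → Bool) (v : V) : Prop :=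
  ∃ R : {R // R ∈ 𝒮}, v ∈ R.val ∧ I R = false

/-- The move `(σ, I)` maps the labeling `X` to the labeling `Y`:
active unrestricted vertices adopt their proposal, everyone else keeps their label. -/
def MoveMapsTo (𝒮 : Finset (Finset V)) (σ : V → Option L) (I : {R // R ∈ 𝒮} → Bool)
    (X Y : V → L) : Prop :=
  ∀ v, Y v = if Restricted 𝒮 I v then X v else (σ v).getD (X v)

/-- A choice vector for constraint set `R`: each vertex of `R` chooses 'cur'
(`false`) or, if active, 'prop' (`true`), with at least one 'prop'; vertices
outside `R` make no choice. -/
def IsChoice (σ : V → Option L) (R : Finset V) (c : V → Bool) : Prop :=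
  (∀ v, c v = true → v ∈ R ∧ (σ v).isSome) ∧ (∃ v ∈ R, c v = true)

/-- The potential labeling `ℓ_c` determined by a choice vector `c`. -/
def potential (σ : V → Option L) (X : V → L) (c : V → Bool) : V → L :=
  fun v => if c v then (σ v).getD (X v) else X v

/-- `q_R(σ, X)`: the probability that constraint set `R` passes the local filter. -/
def q (C : Finset V → (V → L) → ℝ) (σ : V → Option L) (X : V → L) (R : Finset V) : ℝ :=
  ∏ c ∈ Finset.univ.filter (fun c : V → Bool => IsChoice σ R c),
    C R (potential σ X c) / Cstar C R

/-- `P(σ)`: the probability of the marking/proposal outcome `σ`. -/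
def Pprop (b : V → L → ℝ) (p : ℝ) (σ : V → Option L) : ℝ :=
  ∏ v, (σ v).elim (1 - p) (fun l => p * b v l / Sw b v)

/-- `P(I | σ, X)`: the probability of the filter outcome `I` given proposal `σ`
and current labeling `X`. -/
def Pfilter (C : Finset V → (V → L) → ℝ) (𝒮 : Finset (Finset V))
    (σ : V → Option L) (X : V → L) (I : {R // R ∈ 𝒮} → Bool) : ℝ :=
  ∏ R : {R // R ∈ 𝒮}, (if I R then q C σ X R.val else 1 - q C σ X R.val)

/-- The transition matrix `M` of the distributed Metropolis chain. -/
def M (b : V → L → ℝ) (p : ℝ) (𝒮 : Finset (Finset V))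
    (C : Finset V → (V → L) → ℝ) : Matrix (V → L) (V → L) ℝ :=
  fun X Y => ∑ σ : V → Option L, ∑ I : {R // R ∈ 𝒮} → Bool,
    if MoveMapsTo 𝒮 σ I X Y then Pprop b p σ * Pfilter C 𝒮 σ X I else 0

/-- `π(X)`: the probability of labeling `X`, proportional to its weight. -/
def pie (b : V → L → ℝ) (𝒮 : Finset (Finset V)) (C : Finset V → (V → L) → ℝ)
    (X : V → L) : ℝ :=
  weight b 𝒮 C X / ∑ Z : V → L, weight b 𝒮 C Z

/-- The modified proposal `σ'` associated with a move taking `X` to `Y`. -/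
def sigma' (X Y : V → L) (σ : V → Option L) : V → Option L :=
  fun v => if X v ≠ Y v then some (X v) else σ v

end DistSampling

/-! The vertex factors match because `b_v(X v) · p b_v(Y v) / S_v` is symmetric in `X v` and
`Y v`. For a constraint set `R`, let `d` mark the vertices of `R` that change. Toggling a choice
vector on `d` is an involution of the choice vectors for `R` (`σ` and `σ'` activate the same
vertices), it turns each potential labeling of `(σ, X)` into one of `(σ', Y)` that agrees with it
on `R`, and it exchanges the all-'cur' vector (giving `X`) with `d` (giving `Y`). Hence
`C_R(X) q_R(σ, X) = C_R(Y) q_R(σ', Y)`; a failed filter forces `X = Y` on `R`, so the factors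
`C_R · (1 - q_R)` agree as well. -/

namespace DistSampling

variable {V L : Type*}

section Proposal

variable [DecidableEq L] {X Y : V → L} {σ : V → Option L} {v : V}

theorem sigma'_of_eq (h : X v = Y v) : sigma' X Y σ v = σ v := by
  simp [sigma', h]

theorem sigma'_of_ne (h : X v ≠ Y v) : sigma' X Y σ v = some (X v) := by
  simp [sigma', h]

theorem isSome_sigma' (hact : ∀ v, X v ≠ Y v → σ v = some (Y v)) (v : V) :
    (sigma' X Y σ v).isSome = (σ v).isSome := by
  by_cases h : X v = Y v
  · rw [sigma'_of_eq h]
  · rw [sigma'_of_ne h, hact v h]; rfl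

theorem isChoice_sigma' (hact : ∀ v, X v ≠ Y v → σ v = some (Y v)) :
    IsChoice (sigma' X Y σ) = IsChoice (L := L) σ := by
  funext R c; simp only [IsChoice, isSome_sigma' hact]

theorem prod_mul_Pprop_sigma' [Fintype V] [Fintype L] (b : V → L → ℝ) (p : ℝ)
    (hact : ∀ v, X v ≠ Y v → σ v = some (Y v)) :
    (∏ v, b v (X v)) * Pprop b p σ = (∏ v, b v (Y v)) * Pprop b p (sigma' X Y σ) := by
  simp only [Pprop, ← prod_mul_distrib]
  refine prod_congr rfl fun v _ => ?_
  by_cases h : X v = Y v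
  · rw [sigma'_of_eq h, h]
  · rw [hact v h, sigma'_of_ne h, Option.elim_some, Option.elim_some]
    ring

end Proposal

namespace MoveMapsTo

variable {𝒮 : Finset (Finset V)} {σ : V → Option L} {I : {R // R ∈ 𝒮} → Bool} {X Y : V → L}

theorem not_restricted_of_ne (hmap : MoveMapsTo 𝒮 σ I X Y) {v : V} (h : X v ≠ Y v) :
    ¬ Restricted 𝒮 I v := fun hr => h (by rw [hmap v, if_pos hr])

theorem proposal_eq_of_ne (hmap : MoveMapsTo 𝒮 σ I X Y) :
    ∀ v, X v ≠ Y v → σ v = some (Y v) := fun v h => by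
  have hv := hmap v
  rw [if_neg (hmap.not_restricted_of_ne h)] at hv
  cases hσ : σ v with
  | none => rw [hσ, Option.getD_none] at hv; exact absurd hv.symm h
  | some l => rw [hσ, Option.getD_some] at hv; rw [hv]

theorem eq_of_filter_false (hmap : MoveMapsTo 𝒮 σ I X Y) {R : {R // R ∈ 𝒮}}
    (hR : I R = false) : ∀ v ∈ R.val, X v = Y v := fun v hv => by
  by_contra h
  exact hmap.not_restricted_of_ne h ⟨R, hv, hR⟩

end MoveMapsTo

def changedIn [DecidableEq V] [DecidableEq L] (R : Finset V) (X Y : V → L) : V → Bool :=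
  fun v => decide (v ∈ R ∧ X v ≠ Y v)

def toggle (d c : V → Bool) : V → Bool := fun v => c v ^^ d v

theorem toggle_toggle (d c : V → Bool) : toggle d (toggle d c) = c := by
  funext v; simp [toggle]

theorem toggle_self (d : V → Bool) : toggle d d = fun _ => false := by
  funext v; simp [toggle]

theorem toggle_false (d : V → Bool) : toggle d (fun _ => false) = d := by
  funext v; simp [toggle]

theorem potential_false (σ : V → Option L) (X : V → L) : potential σ X (fun _ => false) = X := by
  funext v; simp [potential]

section Choice

variable [DecidableEq V] [DecidableEq L] {R : Finset V} {X Y : V → L} {σ : V → Option L}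

theorem mem_and_isSome_of_changedIn (hact : ∀ v, X v ≠ Y v → σ v = some (Y v)) {v : V}
    (hv : changedIn R X Y v = true) : v ∈ R ∧ (σ v).isSome := by
  obtain ⟨hvR, hne⟩ := of_decide_eq_true hv
  exact ⟨hvR, by rw [hact v hne]; rfl⟩

theorem isChoice_changedIn (hact : ∀ v, X v ≠ Y v → σ v = some (Y v))
    (h : ∃ v ∈ R, X v ≠ Y v) : IsChoice σ R (changedIn R X Y) :=
  ⟨fun _ => mem_and_isSome_of_changedIn hact,
    h.imp fun _ ⟨hvR, hne⟩ => ⟨hvR, decide_eq_true ⟨hvR, hne⟩⟩⟩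

theorem not_isChoice_changedIn (h : ∀ v ∈ R, X v = Y v) : ¬ IsChoice σ R (changedIn R X Y) :=
  fun ⟨_, v, hvR, hv⟩ => (of_decide_eq_true hv).2 (h v hvR)

theorem isChoice_toggle (hact : ∀ v, X v ≠ Y v → σ v = some (Y v)) {c : V → Bool}
    (hc : IsChoice σ R c) (hne : c ≠ changedIn R X Y) :
    IsChoice σ R (toggle (changedIn R X Y) c) := by
  have hsupp : ∀ v, toggle (changedIn R X Y) c v = true → v ∈ R ∧ (σ v).isSome := by
    intro v hv
    cases hcv : c v
    · rw [toggle, hcv, Bool.false_xor] at hv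
      exact mem_and_isSome_of_changedIn hact hv
    · exact hc.1 v hcv
  obtain ⟨v, hv⟩ := Function.ne_iff.mp hne
  have hvt : toggle (changedIn R X Y) c v = true := bne_iff_ne.mpr hv
  exact ⟨hsupp, v, (hsupp v hvt).1, hvt⟩

theorem toggle_ne_changedIn {c : V → Bool} (hc : IsChoice σ R c) :
    toggle (changedIn R X Y) c ≠ changedIn R X Y := fun h => by
  obtain ⟨_, v, -, hv⟩ := hc
  have := congrFun (congrArg (toggle (changedIn R X Y)) h) v
  simp [toggle, hv] at this

theorem potential_sigma'_toggle (hact : ∀ v, X v ≠ Y v → σ v = some (Y v)) (c : V → Bool) :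
    ∀ v ∈ R, potential (sigma' X Y σ) Y (toggle (changedIn R X Y) c) v = potential σ X c v := by
  intro v hvR
  by_cases h : X v = Y v
  · have hd : changedIn R X Y v = false := decide_eq_false (fun h' => h'.2 h)
    simp [potential, toggle, hd, sigma'_of_eq h, h]
  · have hd : changedIn R X Y v = true := decide_eq_true ⟨hvR, h⟩
    cases hc : c v <;> simp [potential, toggle, hd, hc, sigma'_of_ne h, hact v h]

end Choice

theorem mul_q_sigma' [Fintype V] [Fintype L] [DecidableEq V] [DecidableEq L] [Nonempty L]
    (C : Finset V → (V → L) → ℝ) {R : Finset V} (hloc : DependsOn (C R) R)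
    {X Y : V → L} {σ : V → Option L} (hact : ∀ v, X v ≠ Y v → σ v = some (Y v)) :
    C R X * q C σ X R = C R Y * q C (sigma' X Y σ) Y R := by
  set d := changedIn R X Y
  set F : (V → Bool) → ℝ := fun c => C R (potential σ X c) / Cstar C R
  set G : (V → Bool) → ℝ := fun c => C R (potential (sigma' X Y σ) Y c) / Cstar C R
  have hGF : ∀ c, G (toggle d c) = F c := fun c => by
    simp only [F, G]; rw [hloc (potential_sigma'_toggle hact c)]
  have hq : q C σ X R = ∏ c ∈ univ.filter (IsChoice σ R), F c := rfl
  have hq' : q C (sigma' X Y σ) Y R = ∏ c ∈ univ.filter (IsChoice σ R), G c := by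
    rw [q, isChoice_sigma' hact]
  have hrest : ∏ c ∈ (univ.filter (IsChoice σ R)).erase d, F c =
      ∏ c ∈ (univ.filter (IsChoice σ R)).erase d, G c := by
    have hmem : ∀ c ∈ (univ.filter (IsChoice σ R)).erase d,
        toggle d c ∈ (univ.filter (IsChoice σ R)).erase d := fun c hc => by
      simp only [mem_erase, mem_filter, mem_univ, true_and] at hc ⊢
      exact ⟨toggle_ne_changedIn hc.2, isChoice_toggle hact hc.2 hc.1⟩
    exact prod_nbij' (toggle d) (toggle d) hmem hmem (fun c _ => toggle_toggle d c)
      (fun c _ => toggle_toggle d c) (fun c _ => (hGF c).symm)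
  by_cases hchanged : ∃ v ∈ R, X v ≠ Y v
  · have hd : d ∈ univ.filter (IsChoice σ R) := by
      simpa using isChoice_changedIn hact hchanged
    have hFd : F d = C R Y / Cstar C R := by
      rw [← hGF d, toggle_self]; simp only [G, potential_false]
    have hGd : G d = C R X / Cstar C R := by
      rw [← toggle_false d, hGF]; simp only [F, potential_false]
    rw [hq, hq', ← mul_prod_erase _ _ hd, ← mul_prod_erase _ _ hd, hFd, hGd, hrest]
    ring
  · push Not at hchanged
    have hd : d ∉ univ.filter (IsChoice σ R) := by
      simpa using not_isChoice_changedIn (σ := σ) hchanged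
    rw [hq, hq', ← erase_eq_of_notMem hd, hrest, hloc hchanged]

theorem prod_mul_Pfilter_sigma' [Fintype V] [Fintype L] [DecidableEq V] [DecidableEq L]
    [Nonempty L] {𝒮 : Finset (Finset V)} {C : Finset V → (V → L) → ℝ}
    (hloc : ∀ R ∈ 𝒮, DependsOn (C R) R) {σ : V → Option L} {I : {R // R ∈ 𝒮} → Bool}
    {X Y : V → L} (hmap : MoveMapsTo 𝒮 σ I X Y) :
    (∏ R ∈ 𝒮, C R X) * Pfilter C 𝒮 σ X I =
      (∏ R ∈ 𝒮, C R Y) * Pfilter C 𝒮 (sigma' X Y σ) Y I := by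
  have hfactor : ∀ R : {R // R ∈ 𝒮},
      C R X * (if I R then q C σ X R else 1 - q C σ X R) =
        C R Y * (if I R then q C (sigma' X Y σ) Y R else 1 - q C (sigma' X Y σ) Y R) := by
    intro R
    have hq := mul_q_sigma' C (hloc R R.2) hmap.proposal_eq_of_ne
    cases hR : I R
    · have hC : C R X = C R Y := hloc R R.2 (hmap.eq_of_filter_false hR)
      simp only [Bool.false_eq_true, if_false]
      rw [mul_sub, mul_sub, hq, hC]
    · simpa using hq
  simp only [Pfilter, ← prod_coe_sort 𝒮, ← prod_mul_distrib]
  exact prod_congr rfl fun R _ => hfactor R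

variable [Fintype V] [Fintype L] [DecidableEq V] [DecidableEq L] [Nonempty V] [Nonempty L]

theorem move_weight_ratio_general
(b : V → L → ℝ) (p : ℝ) (𝒮 : Finset (Finset V)) (C : Finset V → (V → L) → ℝ)
    (hCloc : ∀ R ∈ 𝒮, ∀ X Y : V → L, (∀ v ∈ R, X v = Y v) → C R X = C R Y)
    (X Y : V → L)
    (σ : V → Option L) (I : {R // R ∈ 𝒮} → Bool) (hmap : MoveMapsTo 𝒮 σ I X Y) :
    weight b 𝒮 C X * (Pprop b p σ * Pfilter C 𝒮 σ X I) =
      weight b 𝒮 C Y * (Pprop b p (sigma' X Y σ) * Pfilter C 𝒮 (sigma' X Y σ) Y I) := by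
  have hloc : ∀ R ∈ 𝒮, DependsOn (C R) R := fun R hR _ _ h => hCloc R hR _ _ h
  calc weight b 𝒮 C X * (Pprop b p σ * Pfilter C 𝒮 σ X I)
      = ((∏ v, b v (X v)) * Pprop b p σ) * ((∏ R ∈ 𝒮, C R X) * Pfilter C 𝒮 σ X I) := by
        rw [weight]; ring
    _ = ((∏ v, b v (Y v)) * Pprop b p (sigma' X Y σ)) *
          ((∏ R ∈ 𝒮, C R Y) * Pfilter C 𝒮 (sigma' X Y σ) Y I) := by
        rw [prod_mul_Pprop_sigma' b p hmap.proposal_eq_of_ne,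
          prod_mul_Pfilter_sigma' hloc hmap]
    _ = weight b 𝒮 C Y * (Pprop b p (sigma' X Y σ) * Pfilter C 𝒮 (sigma' X Y σ) Y I) := by
        rw [weight]; ring

/-- w(X)·P(σ)·P(I|σ,X) = w(Y)·P(σ')·P(I|σ',Y). -/
theorem move_weight_ratio
(b : V → L → ℝ) (p : ℝ) (𝒮 : Finset (Finset V)) (C : Finset V → (V → L) → ℝ)
    (hb : ∀ v l, 0 ≤ b v l) (hS : ∀ v, 0 < Sw b v)
    (hcard : ∀ R ∈ 𝒮, 2 ≤ R.card)
    (hC0 : ∀ R ∈ 𝒮, ∀ X : V → L, 0 ≤ C R X)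
    (hCloc : ∀ R ∈ 𝒮, ∀ X Y : V → L, (∀ v ∈ R, X v = Y v) → C R X = C R Y)
    (hCstar : ∀ R ∈ 𝒮, 0 < Cstar C R)
    (hp : 0 < p) (hp1 : p < 1)
    (hvalid : ∃ Z : V → L, 0 < weight b 𝒮 C Z)
    (X Y : V → L) (hX : 0 < weight b 𝒮 C X) (hY : 0 < weight b 𝒮 C Y) (hXY : X ≠ Y)
    (σ : V → Option L) (I : {R // R ∈ 𝒮} → Bool) (hmap : MoveMapsTo 𝒮 σ I X Y) :
    weight b 𝒮 C X * (Pprop b p σ * Pfilter C 𝒮 σ X I) =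
      weight b 𝒮 C Y * (Pprop b p (sigma' X Y σ) * Pfilter C 𝒮 (sigma' X Y σ) Y I) :=
  move_weight_ratio_general b p 𝒮 C hCloc X Y σ I hmap

end DistSampling
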